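/- Assume additionally q^+ < p^-_*. Then there exists a generalized N-function R : ℝ^d × [0,∞) → [0,∞), R(x,t) = ∫₀^t r(x,s) ds, such that: (1) there are constants 1 < r^- ≤ r^+ < p^-_*/q^+ with r^- ≤ r(x,t)·t/R(x,t) ≤ r^+ for a.e. x and all t > 0; (2) there are c₁, c₂ > 0 with c₁ < R(x,1) < c₂ for a.e. x; (3) R∘H ≪ H_*, i.e. for every k > 0, R(x, H(x, k·t))/H_*(x,t) → 0 as t → ∞ uniformly in x. -/

import Mathlib

open MeasureTheory Real Filter Topology
open scoped ENNReal

noncomputable section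

def IsGeneralizedNFunction {d : ℕ} (Φ : EuclideanSpace ℝ (Fin d) → ℝ → ℝ) : Prop :=
  (∀ t : ℝ, 0 ≤ t → Measurable fun x => Φ x t) ∧
    ∀ᵐ x ∂(volume : Measure (EuclideanSpace ℝ (Fin d))),
      ContinuousOn (Φ x) (Set.Ici 0) ∧ ConvexOn ℝ (Set.Ici 0) (Φ x) ∧
      MonotoneOn (Φ x) (Set.Ici 0) ∧ Φ x 0 = 0 ∧ (∀ t, 0 < t → 0 < Φ x t) ∧
      Filter.Tendsto (fun t => Φ x t / t) (nhdsWithin 0 (Set.Ioi 0)) (nhds 0) ∧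
      Filter.Tendsto (fun t => Φ x t / t) Filter.atTop Filter.atTop

/-
Take `R(x, t) = t ^ α` with `1 < α < p⁻_* / q⁺` on a full-measure set `S` of points where the
exponent bounds hold. There `s ^ p⁻ / p⁺ ≤ H(x, s) ≤ C s ^ q⁺` for `s ≥ 1`. The lower bound gives
`(τ / H(x, τ)) ^ (1/(d-1)) ≤ C τ ^ ((d - p⁻)/(d - 1) - 1)`, hence `N(x, u) ≤ C u ^ ((d - p⁻)/d)`
for `u ≥ 1`, uniformly in `x` because `H°` does not depend on `x` below `1`. Inverting,
`H_*(x, t) = H(x, N⁻¹(x, t)) ≥ c t ^ p⁻_*` for large `t`, while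
`R(x, H(x, k t)) ≤ C t ^ (α q⁺) = o(t ^ p⁻_*)`.
-/

open Set

theorem rpow_le_one_add_rpow {τ c e : ℝ} (hτ : 0 ≤ τ) (hc : 0 ≤ c) (hce : c ≤ e) :
    τ ^ c ≤ 1 + τ ^ e := by
  rcases le_total τ 1 with hτ1 | hτ1
  · linarith [rpow_le_one hτ hτ1 hc, rpow_nonneg hτ e]
  · linarith [rpow_le_rpow_of_exponent_le hτ1 hce]

theorem rpow_add_mul_rpow_le {τ a b m M q : ℝ} (hτ : 0 ≤ τ) (ha : 1 ≤ a) (haq : a ≤ q)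
    (hb : 1 ≤ b) (hbq : b ≤ q) (hm : 0 ≤ m) (hmM : m ≤ M) :
    τ ^ (a - 1) + m * τ ^ (b - 1) ≤ (1 + M) * (1 + τ ^ (q - 1)) := by
  have h₁ := rpow_le_one_add_rpow hτ (sub_nonneg.2 ha) (sub_le_sub_right haq 1)
  have h₂ := rpow_le_one_add_rpow hτ (sub_nonneg.2 hb) (sub_le_sub_right hbq 1)
  nlinarith [mul_le_mul hmM h₂ (rpow_nonneg hτ _) (hm.trans hmM)]

theorem integral_le_two_mul_rpow {f : ℝ → ℝ} {C q s : ℝ} (hC : 0 ≤ C) (hq : 1 ≤ q) (hs : 1 ≤ s)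
    (hfi : IntervalIntegrable f volume 0 s) (hf : ∀ τ ∈ Ioo 0 s, f τ ≤ C * (1 + τ ^ (q - 1))) :
    ∫ τ in 0..s, f τ ≤ 2 * C * s ^ q := by
  have hint : IntervalIntegrable (fun τ => τ ^ (q - 1)) volume 0 s :=
    intervalIntegral.intervalIntegrable_rpow' (by linarith)
  have hs_le : s ≤ s ^ q := self_le_rpow_of_one_le hs hq
  have hsq_le : s ^ q / q ≤ s ^ q := div_le_self (by positivity) hq
  calc ∫ τ in 0..s, f τ ≤ ∫ τ in 0..s, C * (1 + τ ^ (q - 1)) :=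
        intervalIntegral.integral_mono_on_of_le_Ioo (by linarith) hfi
          ((intervalIntegrable_const.add hint).const_mul C) hf
    _ = C * (s + s ^ q / q) := by
        rw [intervalIntegral.integral_const_mul,
          intervalIntegral.integral_add intervalIntegrable_const hint,
          intervalIntegral.integral_const, integral_rpow (Or.inl (by linarith)), sub_add_cancel,
          zero_rpow (by positivity)]
        simp
    _ ≤ 2 * C * s ^ q := by nlinarith

theorem rpow_div_le_integral {f e : ℝ → ℝ} {a b s : ℝ} (ha : 0 < a) (hab : a ≤ b) (hs : 1 ≤ s)
    (hfi : IntervalIntegrable f volume 0 s) (hf : ∀ τ ∈ Ioo 0 s, τ ^ (e τ - 1) ≤ f τ)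
    (he : ∀ τ ∈ Ioo 0 s, a ≤ e τ ∧ e τ ≤ b) :
    s ^ a / b ≤ ∫ τ in 0..s, f τ := by
  have hb : 0 < b := ha.trans_le hab
  have h1 : (1 : ℝ) ∈ uIcc 0 s := by rw [uIcc_of_le (by linarith)]; exact ⟨zero_le_one, hs⟩
  have h₀ : IntervalIntegrable f volume 0 1 := hfi.mono_set (uIcc_subset_uIcc_left h1)
  have h₁ : IntervalIntegrable f volume 1 s := hfi.mono_set (uIcc_subset_uIcc_right h1)
  have hlow₀ : 1 / b ≤ ∫ τ in 0..1, f τ := by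
    have := intervalIntegral.integral_mono_on_of_le_Ioo zero_le_one
      (intervalIntegral.intervalIntegrable_rpow' (r := b - 1) (by linarith)) h₀ fun τ hτ => ?_
    · rwa [integral_rpow (Or.inl (by linarith)), sub_add_cancel, one_rpow, zero_rpow hb.ne',
        sub_zero] at this
    · have hτs : τ ∈ Ioo 0 s := ⟨hτ.1, hτ.2.trans_le hs⟩
      exact (rpow_le_rpow_of_exponent_ge hτ.1 hτ.2.le (by linarith [he τ hτs])).trans (hf τ hτs)
  have hlow₁ : (s ^ a - 1) / a ≤ ∫ τ in 1..s, f τ := by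
    have := intervalIntegral.integral_mono_on_of_le_Ioo hs
      (intervalIntegral.intervalIntegrable_rpow' (r := a - 1) (by linarith)) h₁ fun τ hτ => ?_
    · rwa [integral_rpow (Or.inl (by linarith)), sub_add_cancel, one_rpow] at this
    · have hτs : τ ∈ Ioo 0 s := ⟨zero_lt_one.trans hτ.1, hτ.2⟩
      exact (rpow_le_rpow_of_exponent_le hτ.1.le (by linarith [he τ hτs])).trans (hf τ hτs)
  have hsa : (s ^ a - 1) / b ≤ (s ^ a - 1) / a :=
    div_le_div_of_nonneg_left (by linarith [one_le_rpow hs ha.le]) ha hab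
  rw [← intervalIntegral.integral_add_adjacent_intervals h₀ h₁]
  calc s ^ a / b = 1 / b + (s ^ a - 1) / b := by ring
    _ ≤ _ := by linarith

theorem continuousOn_of_eq_rpow_add_mul_rpow {f a b : ℝ → ℝ} {m : ℝ}
    (ha : ContinuousOn a (Ici 0)) (hb : ContinuousOn b (Ici 0))
    (ha1 : ∀ τ, 0 ≤ τ → 1 < a τ) (hb1 : ∀ τ, 0 ≤ τ → 1 < b τ)
    (hf0 : f 0 = 0) (hf : ∀ τ, 0 < τ → f τ = τ ^ (a τ - 1) + m * τ ^ (b τ - 1)) :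
    ContinuousOn f (Ici 0) := by
  have hcont : ContinuousOn (fun τ => τ ^ (a τ - 1) + m * τ ^ (b τ - 1)) (Ici 0) :=
    (continuousOn_id.rpow (ha.sub continuousOn_const)
        fun τ hτ => Or.inr (show 0 < a τ - 1 by linarith [ha1 τ hτ])).add
      (continuousOn_const.mul (continuousOn_id.rpow (hb.sub continuousOn_const)
        fun τ hτ => Or.inr (show 0 < b τ - 1 by linarith [hb1 τ hτ])))
  refine hcont.congr fun τ hτ => ?_
  rcases (mem_Ici.1 hτ).eq_or_lt with rfl | hτ0
  · simp [hf0, zero_rpow (sub_pos.2 (ha1 0 le_rfl)).ne', zero_rpow (sub_pos.2 (hb1 0 le_rfl)).ne']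
  · exact hf τ hτ0

theorem continuousOn_primitive_Ici {f : ℝ → ℝ} (hf : ContinuousOn f (Ici 0)) :
    ContinuousOn (fun s => ∫ τ in 0..s, f τ) (Ici 0) := by
  intro s hs
  have hIcc : uIcc 0 (s + 1) = Ici 0 ∩ Iic (s + 1) := by
    rw [uIcc_of_le (by linarith [mem_Ici.1 hs]), Ici_inter_Iic]
  have hprim := intervalIntegral.continuousOn_primitive_interval (a := 0) (b := s + 1) (μ := volume)
    ((hf.mono (by rw [hIcc]; exact inter_subset_left)).integrableOn_compact isCompact_uIcc)
  exact (hprim s (by rw [hIcc]; exact ⟨hs, by simp⟩)).mono_of_mem_nhdsWithin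
    (by rw [hIcc]; exact inter_mem_nhdsWithin _ (Iic_mem_nhds (by linarith)))

theorem nonneg_of_eq_rpow_add_mul_rpow {f a b : ℝ → ℝ} {m τ : ℝ} (hm : 0 ≤ m) (hf0 : f 0 = 0)
    (hf : ∀ τ, 0 < τ → f τ = τ ^ (a τ - 1) + m * τ ^ (b τ - 1)) (hτ : 0 ≤ τ) : 0 ≤ f τ := by
  rcases hτ.eq_or_lt with rfl | hτ0
  · rw [hf0]
  · rw [hf τ hτ0]
    positivity

theorem primitive_bounds_of_eq_rpow_add_mul_rpow {f F a b : ℝ → ℝ} {m M pm pp q : ℝ}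
    (hpm : 1 < pm) (ha_cont : ContinuousOn a (Ici 0)) (hb_cont : ContinuousOn b (Ici 0))
    (hab : ∀ τ, 0 ≤ τ → pm ≤ a τ ∧ a τ ≤ pp ∧ a τ ≤ b τ ∧ b τ ≤ q) (hm : 0 ≤ m) (hmM : m ≤ M)
    (hf0 : f 0 = 0) (hf : ∀ τ, 0 < τ → f τ = τ ^ (a τ - 1) + m * τ ^ (b τ - 1))
    (hF : ∀ s, F s = ∫ τ in 0..|s|, f τ) :
    ContinuousOn F (Ici 0) ∧ ∀ s, 1 ≤ s → s ^ pm / pp ≤ F s ∧ F s ≤ 2 * (1 + M) * s ^ q := by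
  have hF' : ∀ s, 0 ≤ s → F s = ∫ τ in 0..s, f τ := fun s hs => by rw [hF, abs_of_nonneg hs]
  have hf_cont : ContinuousOn f (Ici 0) := continuousOn_of_eq_rpow_add_mul_rpow ha_cont hb_cont
    (fun τ hτ => by linarith [hab τ hτ]) (fun τ hτ => by linarith [hab τ hτ]) hf0 hf
  refine ⟨(continuousOn_primitive_Ici hf_cont).congr fun s hs => hF' s hs, fun s hs => ?_⟩
  have hfi : IntervalIntegrable f volume 0 s :=
    (hf_cont.mono Icc_subset_Ici_self).intervalIntegrable_of_Icc (by linarith)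
  obtain ⟨hpm₀, hpp₀, hab₀, hbq₀⟩ := hab 0 le_rfl
  rw [hF' s (by linarith)]
  constructor
  · refine rpow_div_le_integral (by linarith) (hpm₀.trans hpp₀) hs hfi (fun τ hτ => ?_)
      fun τ hτ => ⟨(hab τ hτ.1.le).1, (hab τ hτ.1.le).2.1⟩
    rw [hf τ hτ.1]
    linarith [mul_nonneg hm (rpow_nonneg hτ.1.le (b τ - 1))]
  · refine integral_le_two_mul_rpow (by linarith) (by linarith) hs hfi fun τ hτ => ?_
    obtain ⟨ha₁, -, hab₁, hbq₁⟩ := hab τ hτ.1.le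
    rw [hf τ hτ.1]
    exact rpow_add_mul_rpow_le hτ.1.le (by linarith) (hab₁.trans hbq₁) (by linarith) hbq₁ hm hmM

theorem intervalIntegral_congr_of_eqOn_Ico {f g : ℝ → ℝ} {a b : ℝ} (hab : a ≤ b)
    (h : EqOn f g (Ico a b)) : ∫ τ in a..b, f τ = ∫ τ in a..b, g τ := by
  simp only [intervalIntegral.integral_of_le hab, integral_Ioc_eq_integral_Ioo]
  exact setIntegral_congr_fun measurableSet_Ioo (h.mono Ioo_subset_Ico_self)

/-- A non-integrable integrand has integral `0` by convention, which would make `N 1 = N 0`. -/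
theorem intervalIntegrable_of_rpow_integral_leftInverse {ψ N Ninv : ℝ → ℝ} {e : ℝ}
    (hN : ∀ u, 0 ≤ u → N u = (∫ τ in 0..u, ψ τ) ^ e) (hNinv : ∀ t, 0 ≤ t → Ninv (N t) = t) :
    IntervalIntegrable ψ volume 0 1 := by
  by_contra hψ
  have hN₁ : N 1 = N 0 := by
    rw [hN 1 zero_le_one, hN 0 le_rfl, intervalIntegral.integral_undef hψ,
      intervalIntegral.integral_same]
  have := hNinv 1 zero_le_one
  rw [hN₁, hNinv 0 le_rfl] at this
  exact zero_ne_one this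

theorem one_le_of_rpow_integral_eq {ψ : ℝ → ℝ} {e u t : ℝ} (hψ : IntervalIntegrable ψ volume 0 1)
    (he : 0 ≤ e) (hu : 0 ≤ u) (ht : (∫ τ in 0..1, |ψ τ|) ^ e < t)
    (hut : (∫ τ in 0..u, ψ τ) ^ e = t) : 1 ≤ u := by
  by_contra! hu1
  have hI : |∫ τ in 0..u, ψ τ| ≤ ∫ τ in 0..1, |ψ τ| :=
    (intervalIntegral.abs_integral_le_integral_abs hu).trans
      (intervalIntegral.integral_mono_interval le_rfl hu hu1.le
        (ae_of_all _ fun _ => abs_nonneg _) hψ.abs)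
  have := (abs_rpow_le_abs_rpow _ e).trans (rpow_le_rpow (abs_nonneg _) hI he)
  rw [hut] at this
  linarith [le_abs_self t]

theorem rpow_integral_le_mul_rpow {ψ : ℝ → ℝ} {c γ e u : ℝ} (hγ : 0 < γ) (he : 0 ≤ e)
    (hc : 0 ≤ c) (hu : 1 ≤ u) (hψ₀ : IntervalIntegrable ψ volume 0 1)
    (hψ₁ : IntervalIntegrable ψ volume 1 u)
    (hψ : ∀ τ ∈ Icc 1 u, 0 ≤ ψ τ ∧ ψ τ ≤ c * τ ^ (γ - 1)) :
    (∫ τ in 0..u, ψ τ) ^ e ≤ ((∫ τ in 0..1, |ψ τ|) + c / γ) ^ e * u ^ (γ * e) := by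
  set I := ∫ τ in 0..1, |ψ τ|
  have hI : 0 ≤ I := intervalIntegral.integral_nonneg zero_le_one fun _ _ => abs_nonneg _
  have hJ₀ : 0 ≤ ∫ τ in 1..u, ψ τ := intervalIntegral.integral_nonneg hu fun τ hτ => (hψ τ hτ).1
  have hJ : ∫ τ in 1..u, ψ τ ≤ c / γ * u ^ γ :=
    calc ∫ τ in 1..u, ψ τ ≤ ∫ τ in 1..u, c * τ ^ (γ - 1) :=
          intervalIntegral.integral_mono_on hu hψ₁
            ((intervalIntegral.intervalIntegrable_rpow' (by linarith)).const_mul c)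
            fun τ hτ => (hψ τ hτ).2
      _ = c / γ * (u ^ γ - 1) := by
          rw [intervalIntegral.integral_const_mul, integral_rpow (Or.inl (by linarith)),
            sub_add_cancel, one_rpow]
          ring
      _ ≤ c / γ * u ^ γ := by gcongr; linarith
  have huγ : 1 ≤ u ^ γ := one_le_rpow hu hγ.le
  have habs : |∫ τ in 0..u, ψ τ| ≤ (I + c / γ) * u ^ γ := by
    rw [← intervalIntegral.integral_add_adjacent_intervals hψ₀ hψ₁]
    calc _ ≤ |∫ τ in 0..1, ψ τ| + |∫ τ in 1..u, ψ τ| := abs_add_le _ _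
      _ ≤ I + c / γ * u ^ γ :=
          add_le_add (intervalIntegral.abs_integral_le_integral_abs zero_le_one)
            (by rwa [abs_of_nonneg hJ₀])
      _ ≤ (I + c / γ) * u ^ γ := by nlinarith
  calc (∫ τ in 0..u, ψ τ) ^ e ≤ |∫ τ in 0..u, ψ τ| ^ e :=
        (le_abs_self _).trans (abs_rpow_le_abs_rpow _ _)
    _ ≤ ((I + c / γ) * u ^ γ) ^ e := rpow_le_rpow (abs_nonneg _) habs he
    _ = (I + c / γ) ^ e * u ^ (γ * e) := by
        rw [mul_rpow (by positivity) (by positivity), rpow_mul (by linarith)]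

theorem rpow_div_le_mul_rpow {τ G D pm pp : ℝ} (hτ : 0 < τ) (hpp : 0 < pp) (hD : 1 < D)
    (hG : τ ^ pm / pp ≤ G) :
    (τ / G) ^ (1 / (D - 1)) ≤ pp ^ (1 / (D - 1)) * τ ^ ((D - pm) / (D - 1) - 1) := by
  have hG0 : 0 < G := (div_pos (rpow_pos_of_pos hτ pm) hpp).trans_le hG
  have hdiv : τ / G ≤ pp * τ ^ (1 - pm) :=
    calc τ / G ≤ τ / (τ ^ pm / pp) := div_le_div_of_nonneg_left hτ.le (by positivity) hG
      _ = pp * τ ^ (1 - pm) := by rw [rpow_sub hτ, rpow_one]; field_simp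
  calc (τ / G) ^ (1 / (D - 1)) ≤ (pp * τ ^ (1 - pm)) ^ (1 / (D - 1)) :=
        rpow_le_rpow (by positivity) hdiv (one_div_nonneg.2 (by linarith))
    _ = pp ^ (1 / (D - 1)) * τ ^ ((D - pm) / (D - 1) - 1) := by
        have : D - 1 ≠ 0 := by linarith
        rw [mul_rpow hpp.le (by positivity), ← rpow_mul hτ.le]
        congr 2
        field_simp
        ring

theorem rpow_integral_div_le_mul_rpow {Φ G : ℝ → ℝ} {D pm pp u : ℝ} (hpm : 1 < pm)
    (hpmD : pm < D) (hpmp : pm ≤ pp) (hu : 1 ≤ u) (hΦ : ∀ τ, 1 ≤ τ → Φ τ = G τ)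
    (hG_cont : ContinuousOn G (Ici 1)) (hG : ∀ τ, 1 ≤ τ → τ ^ pm / pp ≤ G τ)
    (hψ : IntervalIntegrable (fun τ => (τ / Φ τ) ^ (1 / (D - 1))) volume 0 1) :
    (∫ τ in 0..u, (τ / Φ τ) ^ (1 / (D - 1))) ^ ((D - 1) / D) ≤
      ((∫ τ in 0..1, |(τ / Φ τ) ^ (1 / (D - 1))|) + pp ^ (1 / (D - 1)) / ((D - pm) / (D - 1)))
        ^ ((D - 1) / D) * u ^ ((D - pm) / D) := by
  have hD : 0 < D - 1 := by linarith
  have hpp : 0 < pp := by linarith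
  have hG0 : ∀ τ, 1 ≤ τ → 0 < G τ := fun τ hτ =>
    (div_pos (rpow_pos_of_pos (by linarith) pm) hpp).trans_le (hG τ hτ)
  have hΦ_eq : EqOn (fun τ => (τ / G τ) ^ (1 / (D - 1))) (fun τ => (τ / Φ τ) ^ (1 / (D - 1)))
      (Icc 1 u) := fun τ hτ => by simp only [hΦ τ hτ.1]
  have hψ₁ : IntervalIntegrable (fun τ => (τ / Φ τ) ^ (1 / (D - 1))) volume 1 u := by
    refine ContinuousOn.intervalIntegrable ?_
    rw [uIcc_of_le hu]
    refine ContinuousOn.congr ?_ hΦ_eq.symm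
    exact (continuousOn_id.div (hG_cont.mono Icc_subset_Ici_self) fun τ hτ => (hG0 τ hτ.1).ne')
      |>.rpow_const fun _ _ => Or.inr (by positivity)
  have hexp : (D - pm) / (D - 1) * ((D - 1) / D) = (D - pm) / D := by
    field_simp
  rw [← hexp]
  refine rpow_integral_le_mul_rpow (div_pos (by linarith) hD) (div_nonneg hD.le (by linarith))
    (by positivity) hu hψ hψ₁ fun τ hτ => ?_
  rw [hΦ τ hτ.1]
  have hτ0 : 0 < τ := by linarith [hτ.1]
  exact ⟨by have := hG0 τ hτ.1; positivity, rpow_div_le_mul_rpow hτ0 hpp (by linarith) (hG τ hτ.1)⟩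

theorem exists_rpow_le_sobolevConjugate {X : Type*} [Nonempty X] {S : Set X}
    {H Hc Nf Ninv Hstar : X → ℝ → ℝ} {D pm pp : ℝ} (hpm : 1 < pm) (hpmD : pm < D) (hpmp : pm ≤ pp)
    (hHc_lt : ∀ x y τ, τ < 1 → Hc x τ = Hc y τ) (hHc_ge : ∀ x τ, 1 ≤ τ → Hc x τ = H x τ)
    (hH_cont : ∀ x ∈ S, ContinuousOn (H x) (Ici 1))
    (hH_low : ∀ x ∈ S, ∀ τ, 1 ≤ τ → τ ^ pm / pp ≤ H x τ)
    (hNf : ∀ x t, 0 ≤ t →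
      Nf x t = (∫ τ in (0:ℝ)..t, (τ / Hc x τ) ^ (1 / (D - 1))) ^ ((D - 1) / D))
    (hNinv0 : ∀ x s, 0 ≤ s → 0 ≤ Ninv x s) (hNinv1 : ∀ x s, 0 ≤ s → Nf x (Ninv x s) = s)
    (hNinv2 : ∀ x t, 0 ≤ t → Ninv x (Nf x t) = t) (hHstar : ∀ x t, Hstar x t = Hc x (Ninv x t)) :
    ∃ T₀ c : ℝ, 0 < c ∧ (∀ x t, T₀ < t → Hstar x t = H x (Ninv x t)) ∧
      ∀ x ∈ S, ∀ t, T₀ < t → c * t ^ (D * pm / (D - pm)) ≤ Hstar x t := by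
  obtain ⟨x₀⟩ := ‹Nonempty X›
  have hD : 0 < D - 1 := by linarith
  have hpp : 0 < pp := by linarith
  set ψ : X → ℝ → ℝ := fun x τ => (τ / Hc x τ) ^ (1 / (D - 1))
  have hψ₀ : ∀ x, IntervalIntegrable (ψ x) volume 0 1 := fun x =>
    intervalIntegrable_of_rpow_integral_leftInverse (hNf x) (hNinv2 x)
  set I := ∫ τ in (0:ℝ)..1, |ψ x₀ τ|
  have hI : ∀ x, ∫ τ in (0:ℝ)..1, |ψ x τ| = I := fun x =>
    intervalIntegral_congr_of_eqOn_Ico zero_le_one fun τ hτ => by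
      simp only [ψ, hHc_lt x x₀ τ hτ.2]
  have hI0 : 0 ≤ I := intervalIntegral.integral_nonneg zero_le_one fun _ _ => abs_nonneg _
  have hT₀ : 0 ≤ I ^ ((D - 1) / D) := rpow_nonneg hI0 _
  have hNinv_one : ∀ x t, I ^ ((D - 1) / D) < t → 1 ≤ Ninv x t := fun x t ht => by
    have ht0 := (hT₀.trans_lt ht).le
    exact one_le_of_rpow_integral_eq (hψ₀ x) (div_nonneg hD.le (by linarith)) (hNinv0 x t ht0)
      (by rwa [hI]) ((hNf x _ (hNinv0 x t ht0)).symm.trans (hNinv1 x t ht0))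
  have hHstar_eq : ∀ x t, I ^ ((D - 1) / D) < t → Hstar x t = H x (Ninv x t) := fun x t ht => by
    rw [hHstar, hHc_ge x _ (hNinv_one x t ht)]
  set P := D * pm / (D - pm) with hP
  have hP0 : 0 < P := div_pos (by nlinarith) (by linarith)
  obtain ⟨B, hB_def, hB⟩ : ∃ B, B = (I + pp ^ (1 / (D - 1)) / ((D - pm) / (D - 1))) ^ ((D - 1) / D)
      ∧ 0 < B := ⟨_, rfl, by have : 0 < (D - pm) / (D - 1) := div_pos (by linarith) hD; positivity⟩
  refine ⟨I ^ ((D - 1) / D), (B ^ P * pp)⁻¹, by positivity, hHstar_eq, fun x hx t ht => ?_⟩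
  have ht0 : 0 < t := hT₀.trans_lt ht
  have hu : 1 ≤ Ninv x t := hNinv_one x t ht
  have htu : t ≤ B * Ninv x t ^ ((D - pm) / D) := by
    have := rpow_integral_div_le_mul_rpow hpm hpmD hpmp hu (hHc_ge x) (hH_cont x hx) (hH_low x hx)
      (hψ₀ x)
    rwa [hI, ← hB_def, ← hNf x _ (by linarith), hNinv1 x t ht0.le] at this
  have hexp : (D - pm) / D * P = pm := by
    have : D - pm ≠ 0 := by linarith
    have : D ≠ 0 := by linarith
    rw [hP]
    field_simp
  calc (B ^ P * pp)⁻¹ * t ^ P ≤ (B ^ P * pp)⁻¹ * (B * Ninv x t ^ ((D - pm) / D)) ^ P := by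
        gcongr
    _ = Ninv x t ^ pm / pp := by
        rw [mul_rpow hB.le (by positivity), ← rpow_mul (by linarith), hexp]
        field_simp
    _ ≤ H x (Ninv x t) := hH_low x hx _ hu
    _ = Hstar x t := (hHstar_eq x t ht).symm

/-- Vanishing off `S` makes `R ∘ H ≪ H_*` hold at every point, not only almost everywhere. -/
def rpowOn {X : Type*} (S : Set X) (α : ℝ) (x : X) (t : ℝ) : ℝ := S.indicator (fun _ => t ^ α) x

theorem rpowOn_of_mem {X : Type*} {S : Set X} {α : ℝ} {x : X} (hx : x ∈ S) :
    rpowOn S α x = fun t => t ^ α :=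
  funext fun _ => indicator_of_mem hx _

theorem rpowOn_of_notMem {X : Type*} {S : Set X} {α : ℝ} {x : X} (hx : x ∉ S) :
    rpowOn S α x = 0 :=
  funext fun _ => indicator_of_notMem hx _

theorem isGeneralizedNFunction_rpowOn {d : ℕ} {S : Set (EuclideanSpace ℝ (Fin d))} {α : ℝ}
    (hS : MeasurableSet S) (hS_ae : ∀ᵐ x, x ∈ S) (hα : 1 < α) :
    IsGeneralizedNFunction (rpowOn S α) := by
  have hα0 : 0 < α := by linarith
  have hdiv : ∀ t : ℝ, 0 < t → t ^ α / t = t ^ (α - 1) := fun t ht => by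
    rw [rpow_sub ht, rpow_one]
  refine ⟨fun t _ => measurable_const.indicator hS, ?_⟩
  filter_upwards [hS_ae] with x hx
  rw [rpowOn_of_mem hx]
  refine ⟨(continuous_rpow_const hα0.le).continuousOn, convexOn_rpow hα.le,
    fun a ha b _ hab => rpow_le_rpow ha hab hα0.le, zero_rpow hα0.ne',
    fun t ht => rpow_pos_of_pos ht α, ?_, ?_⟩
  · have h := ((continuous_rpow_const (q := α - 1) (by linarith)).tendsto 0).mono_left
      (nhdsWithin_le_nhds (s := Ioi 0))
    rw [zero_rpow (by linarith)] at h
    exact h.congr' (eventually_nhdsWithin_of_forall fun t ht => (hdiv t ht).symm)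
  · exact (tendsto_rpow_atTop (by linarith)).congr'
      ((eventually_gt_atTop 0).mono fun t ht => (hdiv t ht).symm)

theorem exists_forall_rpowOn_comp_le {X : Type*} {S : Set X} {H Hstar : X → ℝ → ℝ}
    {α q P C c T₀ k ε : ℝ} (hα : 0 < α) (hqP : q * α < P) (hC : 0 ≤ C) (hc : 0 < c)
    (hk : 0 < k) (hε : 0 < ε) (hH_nonneg : ∀ x s, 0 ≤ H x s)
    (hH_le : ∀ x ∈ S, ∀ s, 1 ≤ s → H x s ≤ C * s ^ q)
    (hHstar_nonneg : ∀ x t, T₀ < t → 0 ≤ Hstar x t)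
    (hHstar_ge : ∀ x ∈ S, ∀ t, T₀ < t → c * t ^ P ≤ Hstar x t) :
    ∃ T, ∀ t, T ≤ t → ∀ x, rpowOn S α x (H x (k * t)) ≤ ε * Hstar x t := by
  set K := (C * k ^ q) ^ α
  have hsmall : Tendsto (fun t : ℝ => K * t ^ (q * α - P)) atTop (𝓝 0) := by
    simpa using (tendsto_rpow_neg_atTop (sub_pos.2 hqP)).const_mul K
  obtain ⟨T, hT⟩ := eventually_atTop.1 <|
    (eventually_gt_atTop T₀).and <| (eventually_ge_atTop k⁻¹).and <|
      (eventually_gt_atTop 0).and <| hsmall.eventually_lt_const (mul_pos hε hc)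
  refine ⟨T, fun t ht x => ?_⟩
  obtain ⟨hT₀, hkt, ht0, hKt⟩ := hT t ht
  by_cases hx : x ∈ S
  · rw [rpowOn_of_mem hx]
    have hkt1 : 1 ≤ k * t := by rwa [← inv_mul_le_iff₀ hk, mul_one]
    calc H x (k * t) ^ α ≤ (C * (k * t) ^ q) ^ α :=
          rpow_le_rpow (hH_nonneg x _) (hH_le x hx _ hkt1) hα.le
      _ = K * t ^ (q * α - P) * t ^ P := by
          rw [mul_rpow hk.le ht0.le, ← mul_assoc, mul_rpow (by positivity) (by positivity),
            ← rpow_mul ht0.le, mul_assoc, ← rpow_add ht0, sub_add_cancel]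
      _ ≤ ε * c * t ^ P := by gcongr
      _ ≤ ε * Hstar x t := by rw [mul_assoc]; gcongr; exact hHstar_ge x hx t hT₀
  · rw [rpowOn_of_notMem hx, Pi.zero_apply]
    exact mul_nonneg hε.le (hHstar_nonneg x t hT₀)

theorem rpowOn_eq_integral {X : Type*} {S : Set X} {α : ℝ} (hα : 0 < α) (x : X) (t : ℝ) :
    rpowOn S α x t = ∫ s in (0:ℝ)..t, α * rpowOn S (α - 1) x s := by
  by_cases hx : x ∈ S
  · rw [rpowOn_of_mem hx, rpowOn_of_mem hx, intervalIntegral.integral_const_mul,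
      integral_rpow (Or.inl (by linarith)), sub_add_cancel, zero_rpow hα.ne', sub_zero]
    field_simp
  · simp [rpowOn_of_notMem hx]

theorem mul_rpowOn_sub_one_mul_div_rpowOn {X : Type*} {S : Set X} {α : ℝ} {x : X} (hx : x ∈ S)
    {t : ℝ} (ht : 0 < t) : α * rpowOn S (α - 1) x t * t / rpowOn S α x t = α := by
  simp only [rpowOn_of_mem hx, rpow_sub_one ht.ne']
  field_simp

theorem statement17_general
    {d : ℕ}
    (p q : EuclideanSpace ℝ (Fin d) → ℝ → ℝ)
    (μ : EuclideanSpace ℝ (Fin d) → ℝ)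
    (h H : EuclideanSpace ℝ (Fin d) → ℝ → ℝ)
    (pm pp qm qp : ℝ)
    (hp_cont : ∀ x, ContinuousOn (p x) (Set.Ici 0))
    (hq_cont : ∀ x, ContinuousOn (q x) (Set.Ici 0))
    (hpm2 : 2 ≤ pm) (hpmp : pm ≤ pp) (hppd : pp < (d : ℝ))
    (hqm2 : 2 ≤ qm) (hqmp : qm ≤ qp)
    (hpbd : ∀ᵐ x ∂(volume : Measure (EuclideanSpace ℝ (Fin d))), ∀ t, 0 ≤ t → pm ≤ p x t ∧ p x t ≤ pp)
    (hqbd : ∀ᵐ x ∂(volume : Measure (EuclideanSpace ℝ (Fin d))), ∀ t, 0 ≤ t → qm ≤ q x t ∧ q x t ≤ qp)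
    (hpq : ∀ᵐ x ∂(volume : Measure (EuclideanSpace ℝ (Fin d))), ∀ t, 0 ≤ t →
      p x t < q x t ∧ q x t < (d : ℝ) * pm / ((d : ℝ) - pm))
    (hμ0 : ∀ x, 0 ≤ μ x) (hμbd : ∃ M : ℝ, ∀ x, μ x ≤ M)
    (hh0 : ∀ x, h x 0 = 0)
    (hhdef : ∀ x t, 0 < t → h x t = t ^ (p x t - 1) + μ x * t ^ (q x t - 1))
    (hHdef : ∀ x t, H x t = ∫ s in (0:ℝ)..|t|, h x s)
    (pinf qinf μinf : ℝ)
    (Hc : EuclideanSpace ℝ (Fin d) → ℝ → ℝ)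
    (hHc : ∀ x t, Hc x t = if 1 ≤ t then H x t else t ^ pinf / pinf + μinf / qinf * t ^ qinf)
    (Nf Ninv Hstar : EuclideanSpace ℝ (Fin d) → ℝ → ℝ)
    (hNf : ∀ x t, 0 ≤ t →
      Nf x t = (∫ τ in (0:ℝ)..t, (τ / Hc x τ) ^ (1 / ((d:ℝ) - 1))) ^ (((d:ℝ) - 1) / (d:ℝ)))
    (hNinv0 : ∀ x s, 0 ≤ s → 0 ≤ Ninv x s)
    (hNinv1 : ∀ x s, 0 ≤ s → Nf x (Ninv x s) = s)
    (hNinv2 : ∀ x t, 0 ≤ t → Ninv x (Nf x t) = t)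
    (hHstar : ∀ x t, Hstar x t = Hc x (Ninv x t))
    (hqps : qp < (d : ℝ) * pm / ((d : ℝ) - pm)) :
    ∃ (R r : EuclideanSpace ℝ (Fin d) → ℝ → ℝ) (rm rp c₁ c₂ : ℝ),
      IsGeneralizedNFunction R ∧
      (∀ x t, 0 ≤ t → R x t = ∫ s in (0:ℝ)..t, r x s) ∧
      1 < rm ∧ rm ≤ rp ∧ rp < ((d : ℝ) * pm / ((d : ℝ) - pm)) / qp ∧
      (∀ᵐ x ∂(volume : Measure (EuclideanSpace ℝ (Fin d))), ∀ t, 0 < t →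
        rm ≤ r x t * t / R x t ∧ r x t * t / R x t ≤ rp) ∧
      0 < c₁ ∧ (∀ᵐ x ∂(volume : Measure (EuclideanSpace ℝ (Fin d))), c₁ < R x 1 ∧ R x 1 < c₂) ∧
      (∀ k > (0:ℝ), ∀ ε > (0:ℝ), ∃ T : ℝ, ∀ t, T ≤ t → ∀ x,
        R x (H x (k * t)) ≤ ε * Hstar x t) := by
  obtain ⟨M, hM⟩ := hμbd
  have hgood : ∀ᵐ x ∂(volume : Measure (EuclideanSpace ℝ (Fin d))), ∀ τ, 0 ≤ τ →
      pm ≤ p x τ ∧ p x τ ≤ pp ∧ p x τ ≤ q x τ ∧ q x τ ≤ qp := by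
    filter_upwards [hpbd, hqbd, hpq] with x hp hq hpq τ hτ
    exact ⟨(hp τ hτ).1, (hp τ hτ).2, (hpq τ hτ).1.le, (hq τ hτ).2⟩
  obtain ⟨S, hS_ae, hS_meas, hS⟩ := hgood.exists_measurable_mem
  have hH := fun x (hx : x ∈ S) => primitive_bounds_of_eq_rpow_add_mul_rpow (by linarith)
    (hp_cont x) (hq_cont x) (hS x hx) (hμ0 x) (hM x) (hh0 x) (hhdef x) (hHdef x)
  have hH_nonneg : ∀ x s, 0 ≤ H x s := fun x s => by
    rw [hHdef]
    exact intervalIntegral.integral_nonneg (abs_nonneg s) fun τ hτ =>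
      nonneg_of_eq_rpow_add_mul_rpow (hμ0 x) (hh0 x) (hhdef x) hτ.1
  obtain ⟨T₀, c, hc, hHstar_eq, hHstar_ge⟩ := exists_rpow_le_sobolevConjugate (S := S)
    (by linarith) (hpmp.trans_lt hppd) hpmp
    (fun x y τ hτ => by rw [hHc, hHc, if_neg (not_le.2 hτ), if_neg (not_le.2 hτ)])
    (fun x τ hτ => by rw [hHc, if_pos hτ])
    (fun x hx => (hH x hx).1.mono (Ici_subset_Ici.2 zero_le_one))
    (fun x hx s hs => ((hH x hx).2 s hs).1) hNf hNinv0 hNinv1 hNinv2 hHstar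
  have hqp : 0 < qp := by linarith
  obtain ⟨α, hα⟩ := exists_between ((one_lt_div hqp).2 hqps)
  refine ⟨rpowOn S α, fun x t => α * rpowOn S (α - 1) x t, α, α, 1 / 2, 2,
    isGeneralizedNFunction_rpowOn hS_meas hS_ae hα.1,
    fun x t _ => rpowOn_eq_integral (by linarith) x t, hα.1, le_rfl, hα.2, ?_, by norm_num, ?_,
    fun k hk ε hε => exists_forall_rpowOn_comp_le (by linarith) ((lt_div_iff₀' hqp).1 hα.2)
      (by linarith [(hμ0 0).trans (hM 0)]) hc hk hε hH_nonneg
      (fun x hx s hs => ((hH x hx).2 s hs).2)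
      (fun x t ht => (hHstar_eq x t ht).symm ▸ hH_nonneg _ _) hHstar_ge⟩
  · filter_upwards [hS_ae] with x hx t ht
    rw [mul_rpowOn_sub_one_mul_div_rpowOn hx ht]
    exact ⟨le_rfl, le_rfl⟩
  · filter_upwards [hS_ae] with x hx
    simp only [rpowOn_of_mem hx, one_rpow]
    norm_num

theorem statement17
    {d : ℕ} (hd : 3 ≤ d)
    (p q : EuclideanSpace ℝ (Fin d) → ℝ → ℝ)
    (μ : EuclideanSpace ℝ (Fin d) → ℝ)
    (h H : EuclideanSpace ℝ (Fin d) → ℝ → ℝ)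
    (pm pp qm qp : ℝ)
    (hp_meas : ∀ t : ℝ, 0 ≤ t → Measurable fun x => p x t)
    (hq_meas : ∀ t : ℝ, 0 ≤ t → Measurable fun x => q x t)
    (hp_cont : ∀ x, ContinuousOn (p x) (Set.Ici 0))
    (hq_cont : ∀ x, ContinuousOn (q x) (Set.Ici 0))
    (hpm2 : 2 ≤ pm) (hpmp : pm ≤ pp) (hppd : pp < (d : ℝ))
    (hqm2 : 2 ≤ qm) (hqmp : qm ≤ qp)
    (hpbd : ∀ᵐ x ∂(volume : Measure (EuclideanSpace ℝ (Fin d))), ∀ t, 0 ≤ t → pm ≤ p x t ∧ p x t ≤ pp)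
    (hqbd : ∀ᵐ x ∂(volume : Measure (EuclideanSpace ℝ (Fin d))), ∀ t, 0 ≤ t → qm ≤ q x t ∧ q x t ≤ qp)
    (hpq : ∀ᵐ x ∂(volume : Measure (EuclideanSpace ℝ (Fin d))), ∀ t, 0 ≤ t →
      p x t < q x t ∧ q x t < (d : ℝ) * pm / ((d : ℝ) - pm))
    (hp1 : ∀ x, ∀ t ∈ Set.Icc (0:ℝ) 1, p x t = p x 1)
    (hq1 : ∀ x, ∀ t ∈ Set.Icc (0:ℝ) 1, q x t = q x 1)
    (hpmono : ∀ x, MonotoneOn (p x) (Set.Ici 1))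
    (hqmono : ∀ x, MonotoneOn (q x) (Set.Ici 1))
    (hμ0 : ∀ x, 0 ≤ μ x) (hμbd : ∃ M : ℝ, ∀ x, μ x ≤ M)
    (hμlip : ∃ K : NNReal, LipschitzWith K μ)
    (hh0 : ∀ x, h x 0 = 0)
    (hhdef : ∀ x t, 0 < t → h x t = t ^ (p x t - 1) + μ x * t ^ (q x t - 1))
    (hHdef : ∀ x t, H x t = ∫ s in (0:ℝ)..|t|, h x s)
    (pinf qinf μinf : ℝ)
    (hpinf : pinf = Filter.limsup (fun x => p x 1) (Bornology.cobounded (EuclideanSpace ℝ (Fin d))))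
    (hqinf : qinf = Filter.limsup (fun x => q x 1) (Bornology.cobounded (EuclideanSpace ℝ (Fin d))))
    (hμinf : μinf = Filter.limsup μ (Bornology.cobounded (EuclideanSpace ℝ (Fin d))))
    (Hc : EuclideanSpace ℝ (Fin d) → ℝ → ℝ)
    (hHc : ∀ x t, Hc x t = if 1 ≤ t then H x t else t ^ pinf / pinf + μinf / qinf * t ^ qinf)
    (Nf Ninv Hstar : EuclideanSpace ℝ (Fin d) → ℝ → ℝ)
    (hNf : ∀ x t, 0 ≤ t →
      Nf x t = (∫ τ in (0:ℝ)..t, (τ / Hc x τ) ^ (1 / ((d:ℝ) - 1))) ^ (((d:ℝ) - 1) / (d:ℝ)))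
    (hNinv0 : ∀ x s, 0 ≤ s → 0 ≤ Ninv x s)
    (hNinv1 : ∀ x s, 0 ≤ s → Nf x (Ninv x s) = s)
    (hNinv2 : ∀ x t, 0 ≤ t → Ninv x (Nf x t) = t)
    (hHstar : ∀ x t, Hstar x t = Hc x (Ninv x t))
    (hqps : qp < (d : ℝ) * pm / ((d : ℝ) - pm)) :
    ∃ (R r : EuclideanSpace ℝ (Fin d) → ℝ → ℝ) (rm rp c₁ c₂ : ℝ),
      IsGeneralizedNFunction R ∧
      (∀ x t, 0 ≤ t → R x t = ∫ s in (0:ℝ)..t, r x s) ∧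
      1 < rm ∧ rm ≤ rp ∧ rp < ((d : ℝ) * pm / ((d : ℝ) - pm)) / qp ∧
      (∀ᵐ x ∂(volume : Measure (EuclideanSpace ℝ (Fin d))), ∀ t, 0 < t →
        rm ≤ r x t * t / R x t ∧ r x t * t / R x t ≤ rp) ∧
      0 < c₁ ∧ (∀ᵐ x ∂(volume : Measure (EuclideanSpace ℝ (Fin d))), c₁ < R x 1 ∧ R x 1 < c₂) ∧
      (∀ k > (0:ℝ), ∀ ε > (0:ℝ), ∃ T : ℝ, ∀ t, T ≤ t → ∀ x,
        R x (H x (k * t)) ≤ ε * Hstar x t) :=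
  statement17_general p q μ h H pm pp qm qp hp_cont hq_cont hpm2 hpmp hppd hqm2 hqmp hpbd hqbd hpq
    hμ0 hμbd hh0 hhdef hHdef pinf qinf μinf Hc hHc Nf Ninv Hstar hNf hNinv0 hNinv1 hNinv2 hHstar
    hqps
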